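/- For every integer d ≥ 2, the real polynomials g_{n,d}(t) satisfy the second-order differential recurrence (d−1)·(d·t + d + 1)·g_{2d,d}(t) = (d−1)·((2d−1)·t + 2d)·g_{2d−1,d−1}(t) + t(t+1)²·g''_{2d,d}(t), where g'' denotes the second derivative with respect to t. -/
import Mathlib


open Polynomial

/-- Speyer's g-polynomial of the uniform matroid `U_{n,d}` as a real polynomial:
`g_{n,d}(t) = Σ_{i=1}^{min(d, n-d)} ((n-i-1)! / ((d-i)! (n-d-i)! (i-1)!)) t^i`.
When `d = 0` or `d = n` the sum is empty, so `gPoly n d = 0`, matching the convention. -/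
noncomputable def gPoly (n d : ℕ) : Polynomial ℝ :=
  ∑ i ∈ Finset.Icc 1 (min d (n - d)),
    C ((Nat.factorial (n - i - 1) : ℝ) /
        ((Nat.factorial (d - i) : ℝ) * (Nat.factorial (n - d - i) : ℝ) *
          (Nat.factorial (i - 1) : ℝ))) * X ^ i

lemma coeff_gPoly (n d k : ℕ) : (gPoly n d).coeff k =
    if 1 ≤ k ∧ k ≤ min d (n - d) then
      (Nat.factorial (n - k - 1) : ℝ) /
        ((Nat.factorial (d - k) : ℝ) * (Nat.factorial (n - d - k) : ℝ) *
          (Nat.factorial (k - 1) : ℝ)) else 0 := by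
  simp only [gPoly, finset_sum_coeff, coeff_C_mul, coeff_X_pow, mul_ite, mul_one, mul_zero,
    Finset.sum_ite_eq, Finset.mem_Icc]

lemma fact_cast_succ (n : ℕ) : (Nat.factorial (n+1) : ℝ) = ((n:ℝ)+1) * Nat.factorial n := by
  rw [Nat.factorial_succ]; push_cast; ring

/-- Second-order differential recurrence
`(d-1)(d t + d + 1) g_{2d,d}(t) = (d-1)((2d-1) t + 2d) g_{2d-1,d-1}(t) + t(t+1)^2 g''_{2d,d}(t)`
for `d ≥ 2`. -/
theorem gPoly_diff2_recurrence_diag₁ (d : ℕ) (hd : 2 ≤ d) :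
    C ((d : ℝ) - 1) * (C (d : ℝ) * X + C ((d : ℝ) + 1)) * gPoly (2 * d) d =
      C ((d : ℝ) - 1) * (C (2 * (d : ℝ) - 1) * X + C (2 * (d : ℝ))) * gPoly (2 * d - 1) (d - 1) +
        X * (X + 1) ^ 2 * derivative (derivative (gPoly (2 * d) d)) := by
  set f := gPoly (2 * d) d with hfdef
  set g := gPoly (2 * d - 1) (d - 1) with hgdef
  have hf : ∀ k, f.coeff k = if 1 ≤ k ∧ k ≤ d then
      (Nat.factorial (2*d - k - 1) : ℝ) /
        ((Nat.factorial (d - k) : ℝ) * (Nat.factorial (d - k) : ℝ) *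
          (Nat.factorial (k - 1) : ℝ)) else 0 := by
    intro k
    rw [hfdef, coeff_gPoly, show 2*d - d = d by omega, min_self]
  have hg : ∀ k, g.coeff k = if 1 ≤ k ∧ k ≤ d - 1 then
      (Nat.factorial (2*d - k - 2) : ℝ) /
        ((Nat.factorial (d - 1 - k) : ℝ) * (Nat.factorial (d - k) : ℝ) *
          (Nat.factorial (k - 1) : ℝ)) else 0 := by
    intro k
    rw [hgdef, coeff_gPoly, show 2*d - 1 - (d-1) = d by omega,
      show min (d-1) d = d - 1 by omega, show 2*d - 1 - k - 1 = 2*d - k - 2 by omega]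
  -- key scalar identity
  have key : ∀ t : ℕ,
      ((d:ℝ)-1)*d * f.coeff t + ((d:ℝ)-1)*((d:ℝ)+1) * f.coeff (t+1) =
      ((d:ℝ)-1)*(2*(d:ℝ)-1) * g.coeff t + ((d:ℝ)-1)*(2*(d:ℝ)) * g.coeff (t+1) +
        f.coeff t * t * ((t:ℝ)-1) + 2 * (f.coeff (t+1) * ((t:ℝ)+1) * t) +
        f.coeff (t+2) * ((t:ℝ)+2) * ((t:ℝ)+1) := by
    have hfac : ∀ n : ℕ, (Nat.factorial n : ℝ) ≠ 0 := fun n => by positivity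
    intro t
    simp only [hf, hg]
    by_cases h5 : d + 1 ≤ t
    · rw [if_neg (by omega), if_neg (by omega), if_neg (by omega), if_neg (by omega),
        if_neg (by omega)]
      ring
    by_cases h4 : t = d
    · subst h4
      rw [if_pos (by omega), if_neg (by omega), if_neg (by omega), if_neg (by omega),
        if_neg (by omega)]
      ring
    by_cases h0 : t = 0
    · subst h0
      obtain ⟨q, rfl⟩ : ∃ q, d = q + 2 := ⟨d - 2, by omega⟩
      rw [if_neg (by omega), if_pos (by omega), if_neg (by omega), if_pos (by omega),
        if_pos (by omega)]
      rw [show 2*(q+2) - (0+1) - 1 = 2*q+1+1 by omega, show q+2 - (0+1) = q+1 by omega,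
        show (0:ℕ)+1-1 = 0 by omega,
        show 2*(q+2) - (0+2) - 1 = 2*q+1 by omega, show q+2 - (0+2) = q by omega,
        show (0:ℕ)+2-1 = 1 by omega,
        show 2*(q+2) - (0+1) - 2 = 2*q+1 by omega, show q+1-(0+1) = q by omega]
      rw [fact_cast_succ (2*q+1), fact_cast_succ q]
      simp only [Nat.factorial_zero, Nat.factorial_one, Nat.cast_one]
      have e1 := hfac q
      have e2 := hfac (2*q+1)
      field_simp
      push_cast
      ring
    by_cases h3 : t = d - 1
    · obtain ⟨r, rfl⟩ : ∃ r, d = r + 2 := ⟨d - 2, by omega⟩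
      obtain rfl : t = r + 1 := by omega
      rw [if_pos (by omega), if_pos (by omega), if_pos (by omega), if_neg (by omega),
        if_neg (by omega)]
      rw [show 2*(r+2) - (r+1) - 1 = r+1+1 by omega, show r+2 - (r+1) = 1 by omega,
        show r+1-1 = r by omega,
        show 2*(r+2) - (r+1+1) - 1 = r+1 by omega, show r+2 - (r+1+1) = 0 by omega,
        show r+1+1-1 = r+1 by omega,
        show 2*(r+2) - (r+1) - 2 = r+1 by omega, show r+1-(r+1) = 0 by omega]
      rw [fact_cast_succ (r+1), fact_cast_succ r]
      simp only [Nat.factorial_zero, Nat.factorial_one, Nat.cast_one]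
      have e1 := hfac r
      field_simp
      push_cast
      ring
    · obtain ⟨p, rfl⟩ : ∃ p, t = p + 1 := ⟨t - 1, by omega⟩
      obtain ⟨q, rfl⟩ : ∃ q, d = p + q + 3 := ⟨d - p - 3, by omega⟩
      rw [if_pos (by omega), if_pos (by omega), if_pos (by omega), if_pos (by omega),
        if_pos (by omega)]
      rw [show 2*(p+q+3) - (p+1) - 1 = p+2*q+2+1+1 by omega,
        show p+q+3 - (p+1) = q+1+1 by omega, show p+1-1 = p by omega,
        show 2*(p+q+3) - (p+1+1) - 1 = p+2*q+2+1 by omega,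
        show p+q+3 - (p+1+1) = q+1 by omega, show p+1+1-1 = p+1 by omega,
        show 2*(p+q+3) - (p+1+2) - 1 = p+2*q+2 by omega,
        show p+q+3 - (p+1+2) = q by omega, show p+1+2-1 = p+2 by omega,
        show 2*(p+q+3) - (p+1) - 2 = p+2*q+2+1 by omega,
        show p+q+3-1 - (p+1) = q+1 by omega,
        show 2*(p+q+3) - (p+1+1) - 2 = p+2*q+2 by omega,
        show p+q+3-1 - (p+1+1) = q by omega]
      rw [fact_cast_succ (p+2*q+2+1), fact_cast_succ (p+2*q+2), fact_cast_succ (q+1),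
        fact_cast_succ q, fact_cast_succ (p+1), fact_cast_succ p]
      have e1 := hfac p
      have e2 := hfac q
      have e3 := hfac (p+2*q+2)
      field_simp
      push_cast
      ring
  -- second derivative coefficients
  set h := derivative (derivative f) with hhdef
  have hh : ∀ j, h.coeff j = f.coeff (j+2) * ((j:ℝ)+2) * ((j:ℝ)+1) := by
    intro j
    rw [hhdef, coeff_derivative, coeff_derivative]; push_cast; ring
  have hX : X * (X + 1) ^ 2 * h = h * X^3 + (h * X^2 + h * X^2) + h * X^1 := by ring
  ext k
  rcases k with _ | t
  · simp only [coeff_add, mul_coeff_zero, coeff_C, coeff_X_zero, coeff_one, hf 0, hg 0]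
    norm_num
  · have e1 : (C ((d : ℝ) - 1) * (C (d : ℝ) * X + C ((d : ℝ) + 1)) * f).coeff (t+1)
        = ((d:ℝ)-1)*d * f.coeff t + ((d:ℝ)-1)*((d:ℝ)+1) * f.coeff (t+1) := by
      rw [show C ((d : ℝ) - 1) * (C (d : ℝ) * X + C ((d : ℝ) + 1)) * f
          = C (((d:ℝ)-1)*d) * (X * f) + C (((d:ℝ)-1)*((d:ℝ)+1)) * f by
        simp only [C_mul]; ring]
      rw [coeff_add, coeff_C_mul, coeff_C_mul, coeff_X_mul]
    have e2 : (C ((d : ℝ) - 1) * (C (2 * (d : ℝ) - 1) * X + C (2 * (d : ℝ))) * g).coeff (t+1)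
        = ((d:ℝ)-1)*(2*(d:ℝ)-1) * g.coeff t + ((d:ℝ)-1)*(2*(d:ℝ)) * g.coeff (t+1) := by
      rw [show C ((d : ℝ) - 1) * (C (2 * (d : ℝ) - 1) * X + C (2 * (d : ℝ))) * g
          = C (((d:ℝ)-1)*(2*(d:ℝ)-1)) * (X * g) + C (((d:ℝ)-1)*(2*(d:ℝ))) * g by
        simp only [C_mul]; ring]
      rw [coeff_add, coeff_C_mul, coeff_C_mul, coeff_X_mul]
    have e3 : (X * (X + 1) ^ 2 * h).coeff (t+1)
        = f.coeff t * t * ((t:ℝ)-1) + 2 * (f.coeff (t+1) * ((t:ℝ)+1) * t) +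
          f.coeff (t+2) * ((t:ℝ)+2) * ((t:ℝ)+1) := by
      rw [hX, coeff_add, coeff_add, coeff_add, coeff_mul_X_pow', coeff_mul_X_pow',
        coeff_mul_X_pow']
      rcases t with _ | _ | s
      · norm_num [hh]
      · norm_num [hh]; ring
      · rw [if_pos (by omega), if_pos (by omega), if_pos (by omega),
          show s+2+1-3 = s by omega, show s+2+1-2 = s+1 by omega, show s+2+1-1 = s+2 by omega,
          hh, hh, hh]
        push_cast; ring
    rw [coeff_add, e1, e2, e3, key t]; ring
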